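/- arXiv:cs/0105024 — 10 statements merged into one kernel-verified Lean document; each statement's English description precedes it below -/
import Mathlib

section
/- The rule R_x, which replaces the domain of x by D x ∩ (⋃ over all indices b with b_i ∈ D y_i of D a[b]) in the constraint x = a[y₁,…,yₙ], is sound: every solution of the original CSP is a solution of the transformed CSP and vice versa. -/
open Finset

/-- `v` is a variable of the array constraint `x = a[y₁,…,yₙ]`. -/
def InCon {V α : Type*} {n : ℕ} (x : V) (y : Fin n → V) (valid : Finset (Fin n → α))
    (a : (Fin n → α) → V) (v : V) : Prop :=
  v = x ∨ (∃ i, v = y i) ∨ ∃ b ∈ valid, v = a b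

/-- `σ` is a solution of the array constraint `x = a[y₁,…,yₙ]` with domains `D`:
it respects the domains of the constraint's variables, the selected index is valid,
and `x` equals the selected array variable. -/
def IsSol {V α : Type*} [DecidableEq α] {n : ℕ} (D : V → Finset α) (x : V) (y : Fin n → V)
    (valid : Finset (Fin n → α)) (a : (Fin n → α) → V) (σ : V → α) : Prop :=
  (∀ v, InCon x y valid a v → σ v ∈ D v) ∧
    (fun i => σ (y i)) ∈ valid ∧ σ x = σ (a fun i => σ (y i))

/-- Linearity: all variables occurring in the constraint are pairwise distinct. -/
def Linear {V α : Type*} {n : ℕ} (x : V) (y : Fin n → V) (valid : Finset (Fin n → α))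
    (a : (Fin n → α) → V) : Prop :=
  Function.Injective y ∧
    (∀ b ∈ valid, ∀ b' ∈ valid, a b = a b' → b = b') ∧
    (∀ i, x ≠ y i) ∧ (∀ b ∈ valid, x ≠ a b) ∧ ∀ i, ∀ b ∈ valid, y i ≠ a b

section IsSol

variable {V α : Type*} [DecidableEq α] {n : ℕ} {D D' : V → Finset α} {x : V} {y : Fin n → V}
  {valid : Finset (Fin n → α)} {a : (Fin n → α) → V} {σ : V → α}

theorem IsSol.mono (h : ∀ v, D v ⊆ D' v) (hσ : IsSol D x y valid a σ) :
    IsSol D' x y valid a σ :=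
  ⟨fun v hv => h v (hσ.1 v hv), hσ.2⟩

theorem isSol_update_inter_iff [DecidableEq V] (T : Finset α) :
    IsSol (Function.update D x (D x ∩ T)) x y valid a σ ↔ IsSol D x y valid a σ ∧ σ x ∈ T := by
  constructor
  · intro hσ
    have hx : σ x ∈ D x ∩ T := by simpa using hσ.1 x (Or.inl rfl)
    refine ⟨hσ.mono fun v => ?_, (mem_inter.1 hx).2⟩
    rcases eq_or_ne v x with rfl | hne
    · simp
    · simp [Function.update_of_ne hne]
  · rintro ⟨⟨hdom, hval, heq⟩, hT⟩
    refine ⟨fun v hv => ?_, hval, heq⟩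
    rcases eq_or_ne v x with rfl | hne
    · simpa using mem_inter.2 ⟨hdom v hv, hT⟩
    · simpa [Function.update_of_ne hne] using hdom v hv

theorem IsSol.mem_biUnion_supports (hσ : IsSol D x y valid a σ) :
    σ x ∈ (valid.filter fun b => ∀ i, b i ∈ D (y i)).biUnion fun b => D (a b) := by
  obtain ⟨hdom, hval, heq⟩ := hσ
  refine mem_biUnion.2 ⟨fun i => σ (y i), mem_filter.2 ⟨hval, fun i => ?_⟩, ?_⟩
  · exact hdom (y i) (Or.inr (Or.inl ⟨i, rfl⟩))
  · exact heq ▸ hdom _ (Or.inr (Or.inr ⟨_, hval, rfl⟩))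

end IsSol

theorem stmt2_general {V α : Type*} [DecidableEq V] [DecidableEq α] {n : ℕ}
    (D : V → Finset α) (x : V) (y : Fin n → V) (valid : Finset (Fin n → α))
    (a : (Fin n → α) → V) :
    ∀ σ : V → α,
      IsSol D x y valid a σ ↔
        IsSol (Function.update D x
          (D x ∩ (valid.filter (fun b => ∀ i, b i ∈ D (y i))).biUnion fun b => D (a b)))
          x y valid a σ := by
  intro σ
  rw [isSol_update_inter_iff]
  exact ⟨fun hσ => ⟨hσ, hσ.mem_biUnion_supports⟩, And.left⟩

/-- Soundness of rule R_x: replacing `D x` by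
`D x ∩ ⋃_{b ∈ valid, ∀ i, b i ∈ D (y i)} D (a b)` preserves the solution set of the
linear constraint `x = a[y₁,…,yₙ]`. -/
theorem stmt2 {V α : Type*} [DecidableEq V] [DecidableEq α] {n : ℕ}
    (D : V → Finset α) (x : V) (y : Fin n → V) (valid : Finset (Fin n → α))
    (a : (Fin n → α) → V) (hlin : Linear x y valid a) :
    ∀ σ : V → α,
      IsSol D x y valid a σ ↔
        IsSol (Function.update D x
          (D x ∩ (valid.filter (fun b => ∀ i, b i ∈ D (y i))).biUnion fun b => D (a b)))
          x y valid a σ :=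
  stmt2_general D x y valid a
end

section
/- Suppose the satisfiable linear constraint x = a[y₁,…,yₙ] is closed under rule R_x (i.e., D x ⊆ ⋃_{b_i ∈ D y_i} D a[b]). Then every value d ∈ D x is supported: there exists a solution σ of the constraint with σ x = d. -/
/-
Take any solution `σ₀` and a valid index `b` inside the index domains with `d ∈ D (a b)`, which
closure provides. Overwrite `σ₀` by `b` on the index variables and by `d` on `x` and on `a b`.
Linearity makes these writes independent of each other and leaves every other array variable
at its old, in-domain value, so the result is again a solution, now with `x ↦ d`.
-/

open Finset

section Redirect

variable {V α : Type*} [DecidableEq V] {n : ℕ}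

noncomputable def redirect (σ₀ : V → α) (y : Fin n → V) (b : Fin n → α) (x c : V) (d : α) :
    V → α :=
  Function.update (Function.update (Function.extend y b σ₀) x d) c d

variable {σ₀ : V → α} {y : Fin n → V} {b : Fin n → α} {x c : V} {d : α}

theorem redirect_apply_left : redirect σ₀ y b x c d x = d := by
  by_cases h : x = c
  · subst h; exact Function.update_self ..
  · rw [redirect, Function.update_of_ne h, Function.update_self]

theorem redirect_apply_cell : redirect σ₀ y b x c d c = d :=
  Function.update_self ..

theorem redirect_apply_index (hy : Function.Injective y) (i : Fin n) (hx : y i ≠ x)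
    (hc : y i ≠ c) : redirect σ₀ y b x c d (y i) = b i := by
  rw [redirect, Function.update_of_ne hc, Function.update_of_ne hx, hy.extend_apply]

theorem redirect_apply_of_ne {v : V} (hy : ∀ i, y i ≠ v) (hx : v ≠ x) (hc : v ≠ c) :
    redirect σ₀ y b x c d v = σ₀ v := by
  rw [redirect, Function.update_of_ne hc, Function.update_of_ne hx,
    Function.extend_apply' _ _ _ (by simpa using hy)]

end Redirect

theorem isSol_redirect {V α : Type*} [DecidableEq V] [DecidableEq α] {n : ℕ}
    {D : V → Finset α} {x : V} {y : Fin n → V} {valid : Finset (Fin n → α)}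
    {a : (Fin n → α) → V} {σ₀ : V → α} (hσ₀ : IsSol D x y valid a σ₀)
    (hlin : Linear x y valid a) {b : Fin n → α} (hbv : b ∈ valid)
    (hby : ∀ i, b i ∈ D (y i)) {d : α} (hdx : d ∈ D x) (hdb : d ∈ D (a b)) :
    IsSol D x y valid a (redirect σ₀ y b x (a b) d) := by
  obtain ⟨hyinj, -, hxy, hxa, hya⟩ := hlin
  have hσy : (fun i => redirect σ₀ y b x (a b) d (y i)) = b :=
    funext fun i => redirect_apply_index hyinj i (hxy i).symm (hya i b hbv)
  refine ⟨?_, by rwa [hσy], by rw [hσy, redirect_apply_left, redirect_apply_cell]⟩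
  rintro v (rfl | ⟨i, rfl⟩ | ⟨b', hb'v, rfl⟩)
  · rwa [redirect_apply_left]
  · exact congrFun hσy i ▸ hby i
  · by_cases hcell : a b' = a b
    · rwa [hcell, redirect_apply_cell]
    · rw [redirect_apply_of_ne (fun i => hya i b' hb'v) (hxa b' hb'v).symm hcell]
      exact hσ₀.1 _ (Or.inr (Or.inr ⟨b', hb'v, rfl⟩))

/-- If the satisfiable linear constraint `x = a[y₁,…,yₙ]` is closed under rule R_x
(`D x` is contained in the union of `D (a b)` over valid indices `b` with
`b i ∈ D (y i)`), then every `d ∈ D x` is supported by a solution `σ` with `σ x = d`. -/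
theorem stmt5 {V α : Type*} [DecidableEq V] [DecidableEq α] {n : ℕ}
    (D : V → Finset α) (x : V) (y : Fin n → V) (valid : Finset (Fin n → α))
    (a : (Fin n → α) → V) (hlin : Linear x y valid a)
    (hsat : ∃ σ, IsSol D x y valid a σ)
    (hclosed : ∀ d ∈ D x, ∃ b ∈ valid, (∀ i, b i ∈ D (y i)) ∧ d ∈ D (a b)) :
    ∀ d ∈ D x, ∃ σ, IsSol D x y valid a σ ∧ σ x = d := by
  intro d hd
  obtain ⟨σ₀, hσ₀⟩ := hsat
  obtain ⟨b, hbv, hby, hdb⟩ := hclosed d hd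
  exact ⟨_, isSol_redirect hσ₀ hlin hbv hby hd hdb, redirect_apply_left⟩
end

section
/- Suppose the linear constraint x = a[y₁,…,yₙ] is closed under rule R_y, i.e., for every k and every b ∈ D y_k we have D x ∩ (⋃ over indices b' with b'_i ∈ D y_i and b'_k = b of D a[b']) ≠ ∅. Then every value b ∈ D y_k is supported by a solution of the constraint. -/
open Finset

section

variable {V α : Type*} {n : ℕ} {D : V → Finset α} {x : V} {y : Fin n → V}
  {valid : Finset (Fin n → α)} {a : (Fin n → α) → V}

/-- The solution sends `y i ↦ b i`, `x ↦ c`, `a b ↦ c` and every other variable to an arbitrary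
point of its domain; this is consistent because the `y i` are distinct from each other and from
`x` and the array variables. -/
theorem exists_isSol_of_mem_valid [DecidableEq V] [DecidableEq α]
    (hy : Function.Injective y) (hxy : ∀ i, x ≠ y i) (hya : ∀ i, ∀ b ∈ valid, y i ≠ a b)
    (hne : ∀ v, (D v).Nonempty) {b : Fin n → α} (hb : b ∈ valid) (hbD : ∀ i, b i ∈ D (y i))
    {c : α} (hcx : c ∈ D x) (hca : c ∈ D (a b)) :
    ∃ σ, IsSol D x y valid a σ ∧ ∀ i, σ (y i) = b i := by
  choose d hd using hne
  set σ := Function.extend y b fun v => if v = x ∨ v = a b then c else d v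
  have hσy : ∀ i, σ (y i) = b i := hy.extend_apply _ _
  have hσ_off : ∀ v, (∀ i, y i ≠ v) → σ v = if v = x ∨ v = a b then c else d v :=
    fun v hv => Function.extend_apply' _ _ _ fun ⟨i, hi⟩ => hv i hi
  have hσx : σ x = c := by simp [hσ_off x fun i => (hxy i).symm]
  have hσab : σ (a b) = c := by simp [hσ_off (a b) fun i => hya i b hb]
  have hσ_b : (fun i => σ (y i)) = b := funext hσy
  refine ⟨σ, ⟨?_, hσ_b ▸ hb, by rw [hσ_b, hσx, hσab]⟩, hσy⟩
  rintro v (rfl | ⟨i, rfl⟩ | ⟨b₀, hb₀, rfl⟩)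
  · exact hσx ▸ hcx
  · exact hσy i ▸ hbD i
  · rw [hσ_off _ fun i => hya i b₀ hb₀]
    split_ifs with h
    · rcases h with h | h <;> rw [h] <;> assumption
    · exact hd _

end

/-- If the linear constraint `x = a[y₁,…,yₙ]` over nonempty domains is closed under
rule R_y (for every `k` and `b ∈ D (y k)` there is a valid index `b'` with
`b' i ∈ D (y i)`, `b' k = b` and `D x ∩ D (a b') ≠ ∅`), then every value
`b ∈ D (y k)` is supported by a solution. -/
theorem stmt6 {V α : Type*} [DecidableEq V] [DecidableEq α] {n : ℕ}
    (D : V → Finset α) (x : V) (y : Fin n → V) (valid : Finset (Fin n → α))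
    (a : (Fin n → α) → V) (hlin : Linear x y valid a)
    (hne : ∀ v : V, (D v).Nonempty)
    (hclosed : ∀ k : Fin n, ∀ b ∈ D (y k), ∃ b' ∈ valid,
      (∀ i, b' i ∈ D (y i)) ∧ b' k = b ∧ (D x ∩ D (a b')).Nonempty) :
    ∀ k : Fin n, ∀ b ∈ D (y k), ∃ σ, IsSol D x y valid a σ ∧ σ (y k) = b := by
  intro k b hb
  obtain ⟨hy, -, hxy, -, hya⟩ := hlin
  obtain ⟨b', hb'v, hb'D, rfl, c, hc⟩ := hclosed k b hb
  rw [mem_inter] at hc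
  obtain ⟨σ, hσ, hσy⟩ := exists_isSol_of_mem_valid hy hxy hya hne hb'v hb'D hc.1 hc.2
  exact ⟨σ, hσ, hσy k⟩
end

section
/- If the satisfiable linear constraint x = a[y₁,…,yₙ] is closed under all three rules R_x, R_y, R_a, then it is arc-consistent: every value in the domain of every variable of the constraint (x, each y_i, and each array variable a[b]) is part of some solution. -/
open Finset

/-!
Linearity makes the variables `x`, `y₁,…,yₙ` and the cells `a[b]` pairwise distinct, so a
solution can be assembled from any valid index `β` with `βᵢ ∈ D yᵢ` and any common value
`e ∈ D x ∩ D a[β]`, with every other cell filled in freely. Rules R_x and R_y supply such `β`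
and `e` for a prescribed value of `x` or of some `y_k`. For a value `d` of a cell `a[b]`: if
some `y_k` has a value other than `b_k`, R_y yields a solution selecting an index `≠ b`, whose
cell `a[b]` may then be set to `d`; otherwise the index `b` is forced and R_a gives `d ∈ D x`.
-/

open Function

section Linear

variable {V α : Type*} {n : ℕ} {x : V} {y : Fin n → V} {valid : Finset (Fin n → α)}
  {a : (Fin n → α) → V}

theorem Linear.not_exists_y_eq_x (hlin : Linear x y valid a) : ¬∃ i, y i = x :=
  fun ⟨i, h⟩ => hlin.2.2.1 i h.symm

theorem Linear.not_exists_y_eq_a (hlin : Linear x y valid a) {b : Fin n → α} (hb : b ∈ valid) :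
    ¬∃ i, y i = a b :=
  fun ⟨i, h⟩ => hlin.2.2.2.2 i b hb h

end Linear

section IsSol

variable {V α : Type*} [DecidableEq V] [DecidableEq α] {n : ℕ} {D : V → Finset α} {x : V}
  {y : Fin n → V} {valid : Finset (Fin n → α)} {a : (Fin n → α) → V}

theorem IsSol.update_cell_of_ne {σ : V → α} (hlin : Linear x y valid a)
    (hσ : IsSol D x y valid a σ) {b : Fin n → α} (hb : b ∈ valid)
    (hsel : (fun i => σ (y i)) ≠ b) {d : α} (hd : d ∈ D (a b)) :
    IsSol D x y valid a (update σ (a b) d) := by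
  obtain ⟨hdom, hvalid, hx⟩ := hσ
  have hy : ∀ i, update σ (a b) d (y i) = σ (y i) := fun i =>
    update_of_ne (fun h => hlin.not_exists_y_eq_a hb ⟨i, h⟩) _ _
  have hab : a (fun i => σ (y i)) ≠ a b := fun h => hsel (hlin.2.1 _ hvalid _ hb h)
  simp only [IsSol, hy]
  refine ⟨fun v hv => ?_, hvalid, ?_⟩
  · rcases eq_or_ne v (a b) with rfl | hvb
    · rwa [update_self]
    · rw [update_of_ne hvb]
      exact hdom v hv
  · rw [update_of_ne hab, update_of_ne (hlin.2.2.2.1 b hb), hx]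

theorem exists_isSol_of_selected {σ₀ : V → α} (hlin : Linear x y valid a)
    (hσ₀ : IsSol D x y valid a σ₀) {β : Fin n → α} (hβ : β ∈ valid)
    (hβD : ∀ i, β i ∈ D (y i)) {e : α} (hex : e ∈ D x) (heβ : e ∈ D (a β)) :
    ∃ σ, IsSol D x y valid a σ ∧ σ x = e ∧ (fun i => σ (y i)) = β := by
  set σ := extend y β (update (update σ₀ (a β) e) x e) with hσ
  have hy : ∀ i, σ (y i) = β i := hlin.1.extend_apply _ _
  have hx : σ x = e := by
    rw [hσ, extend_apply' _ _ _ hlin.not_exists_y_eq_x, update_self]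
  have ha : ∀ b ∈ valid, σ (a b) = update σ₀ (a β) e (a b) := fun b hb => by
    rw [hσ, extend_apply' _ _ _ (hlin.not_exists_y_eq_a hb),
      update_of_ne (hlin.2.2.2.1 b hb).symm]
  have hsel : (fun i => σ (y i)) = β := funext hy
  refine ⟨σ, ⟨?_, by rwa [hsel], ?_⟩, hx, hsel⟩
  · rintro v (rfl | ⟨i, rfl⟩ | ⟨b, hb, rfl⟩)
    · rwa [hx]
    · rw [hy]
      exact hβD i
    · rw [ha b hb]
      rcases eq_or_ne b β with rfl | hbβ
      · rwa [update_self]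
      · rw [update_of_ne fun h => hbβ (hlin.2.1 b hb β hβ h)]
        exact hσ₀.1 _ (Or.inr (Or.inr ⟨b, hb, rfl⟩))
  · rw [hsel, hx, ha β hβ, update_self]

end IsSol

/-- If the satisfiable linear constraint `x = a[y₁,…,yₙ]` is closed under the three
rules R_x, R_y and R_a, then it is arc-consistent: every value in the domain of every
variable of the constraint is part of some solution. -/
theorem stmt7 {V α : Type*} [DecidableEq V] [DecidableEq α] {n : ℕ}
    (D : V → Finset α) (x : V) (y : Fin n → V) (valid : Finset (Fin n → α))
    (a : (Fin n → α) → V) (hlin : Linear x y valid a)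
    (hsat : ∃ σ, IsSol D x y valid a σ)
    (hRx : ∀ d ∈ D x, ∃ b ∈ valid, (∀ i, b i ∈ D (y i)) ∧ d ∈ D (a b))
    (hRy : ∀ k : Fin n, ∀ b ∈ D (y k), ∃ b' ∈ valid,
      (∀ i, b' i ∈ D (y i)) ∧ b' k = b ∧ (D x ∩ D (a b')).Nonempty)
    (hRa : ∀ b : Fin n → α, b ∈ valid → (∀ i, D (y i) = {b i}) → D (a b) ⊆ D x) :
    ∀ v : V, InCon x y valid a v → ∀ d ∈ D v,
      ∃ σ, IsSol D x y valid a σ ∧ σ v = d := by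
  obtain ⟨σ₀, hσ₀⟩ := hsat
  rintro v (rfl | ⟨k, rfl⟩ | ⟨b, hb, rfl⟩) d hd
  · obtain ⟨β, hβ, hβD, hdβ⟩ := hRx d hd
    obtain ⟨σ, hσ, hσx, -⟩ := exists_isSol_of_selected hlin hσ₀ hβ hβD hd hdβ
    exact ⟨σ, hσ, hσx⟩
  · obtain ⟨β, hβ, hβD, rfl, e, he⟩ := hRy k d hd
    rw [mem_inter] at he
    obtain ⟨σ, hσ, -, hsel⟩ := exists_isSol_of_selected hlin hσ₀ hβ hβD he.1 he.2
    exact ⟨σ, hσ, congrFun hsel k⟩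
  · by_cases hfree : ∃ k, ∃ c ∈ D (y k), c ≠ b k
    · obtain ⟨k, c, hc, hcb⟩ := hfree
      obtain ⟨β, hβ, hβD, rfl, e, he⟩ := hRy k c hc
      rw [mem_inter] at he
      obtain ⟨σ, hσ, -, hsel⟩ := exists_isSol_of_selected hlin hσ₀ hβ hβD he.1 he.2
      refine ⟨_, hσ.update_cell_of_ne hlin hb ?_ hd, update_self _ _ _⟩
      intro h
      exact hcb (by rw [← h, hsel])
    · push Not at hfree
      have hsing : ∀ k, D (y k) = {b k} := fun k =>
        eq_singleton_iff_nonempty_unique_mem.2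
          ⟨⟨_, hσ₀.1 _ (Or.inr (Or.inl ⟨k, rfl⟩))⟩, hfree k⟩
      obtain ⟨σ, hσ, hσx, hsel⟩ := exists_isSol_of_selected hlin hσ₀ hb
        (fun k => by simp [hsing]) (hRa b hb hsing hd) hd
      exact ⟨σ, hσ, by rw [← hσx, hσ.2.2, hsel]⟩
end

section
/- If the side condition of rule R_y holds for some k and b ∈ D y_k, i.e., D x ∩ D a[b'] = ∅ for every index b' with b'_i ∈ D y_i and b'_k = b, then no solution of the constraint x = a[y₁,…,yₙ] assigns b to y_k. -/
open Finset

namespace IsSol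

variable {V α : Type*} [DecidableEq α] {n : ℕ} {D : V → Finset α} {x : V} {y : Fin n → V}
  {valid : Finset (Fin n → α)} {a : (Fin n → α) → V} {σ : V → α}

theorem mem_domain_index (h : IsSol D x y valid a σ) (i : Fin n) : σ (y i) ∈ D (y i) :=
  h.1 _ (Or.inr (Or.inl ⟨i, rfl⟩))

theorem mem_domain_inter_selected (h : IsSol D x y valid a σ) :
    σ x ∈ D x ∩ D (a fun i => σ (y i)) := by
  obtain ⟨hdom, hvalid, hx⟩ := h
  refine mem_inter.2 ⟨hdom _ (Or.inl rfl), ?_⟩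
  rw [hx]
  exact hdom _ (Or.inr (Or.inr ⟨_, hvalid, rfl⟩))

end IsSol

theorem stmt10_general {V α : Type*} [DecidableEq α] {n : ℕ}
    (D : V → Finset α) (x : V) (y : Fin n → V) (valid : Finset (Fin n → α))
    (a : (Fin n → α) → V)
    (k : Fin n) (b : α)
    (hcond : ∀ b' ∈ valid, (∀ i, b' i ∈ D (y i)) → b' k = b → D x ∩ D (a b') = ∅) :
    ¬ ∃ σ, IsSol D x y valid a σ ∧ σ (y k) = b := by
  rintro ⟨σ, hσ, rfl⟩
  have hdisj := hcond _ hσ.2.1 hσ.mem_domain_index rfl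
  exact eq_empty_iff_forall_notMem.1 hdisj _ hσ.mem_domain_inter_selected

/-- If the side condition of rule R_y holds for `k` and `b ∈ D (y k)` — `D x` is
disjoint from `D (a b')` for every valid index `b'` with `b' i ∈ D (y i)` and
`b' k = b` — then no solution of `x = a[y₁,…,yₙ]` assigns `b` to `y k`. -/
theorem stmt10 {V α : Type*} [DecidableEq V] [DecidableEq α] {n : ℕ}
    (D : V → Finset α) (x : V) (y : Fin n → V) (valid : Finset (Fin n → α))
    (a : (Fin n → α) → V) (hlin : Linear x y valid a)
    (k : Fin n) (b : α) (hb : b ∈ D (y k))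
    (hcond : ∀ b' ∈ valid, (∀ i, b' i ∈ D (y i)) → b' k = b → D x ∩ D (a b') = ∅) :
    ¬ ∃ σ, IsSol D x y valid a σ ∧ σ (y k) = b :=
  stmt10_general D x y valid a k b hcond
end

section
/- If D y₁ × … × D yₙ = {(b₁,…,bₙ)} and d ∈ D a[b] with d ∉ D x, then no solution of the constraint x = a[y₁,…,yₙ] assigns d to a[b₁,…,bₙ]. -/
open Finset

namespace IsSol

variable {V α : Type*} [DecidableEq α] {n : ℕ} {D : V → Finset α} {x : V} {y : Fin n → V}
  {valid : Finset (Fin n → α)} {a : (Fin n → α) → V} {σ : V → α}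

theorem apply_mem_domain_left (hσ : IsSol D x y valid a σ) : σ x ∈ D x :=
  hσ.1 x (Or.inl rfl)

theorem index_eq_of_domain_singleton (hσ : IsSol D x y valid a σ) {b : Fin n → α}
    (hsing : ∀ i, D (y i) = {b i}) : (fun i => σ (y i)) = b := by
  funext i
  simpa only [hsing i, Finset.mem_singleton] using hσ.1 (y i) (Or.inr (Or.inl ⟨i, rfl⟩))

theorem apply_left_eq_of_domain_singleton (hσ : IsSol D x y valid a σ) {b : Fin n → α}
    (hsing : ∀ i, D (y i) = {b i}) : σ x = σ (a b) := by
  rw [hσ.2.2, hσ.index_eq_of_domain_singleton hsing]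

end IsSol

theorem stmt11_general {V α : Type*} [DecidableEq α] {n : ℕ}
    (D : V → Finset α) (x : V) (y : Fin n → V) (valid : Finset (Fin n → α))
    (a : (Fin n → α) → V)
    (b : Fin n → α) (hsing : ∀ i, D (y i) = {b i})
    (d : α) (hdx : d ∉ D x) :
    ¬ ∃ σ, IsSol D x y valid a σ ∧ σ (a b) = d := by
  rintro ⟨σ, hσ, rfl⟩
  exact hdx (hσ.apply_left_eq_of_domain_singleton hsing ▸ hσ.apply_mem_domain_left)

/-- If every index domain is the singleton `{b i}` and `d ∈ D (a b)` with `d ∉ D x`,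
then no solution of `x = a[y₁,…,yₙ]` assigns `d` to the array variable `a b`. -/
theorem stmt11 {V α : Type*} [DecidableEq V] [DecidableEq α] {n : ℕ}
    (D : V → Finset α) (x : V) (y : Fin n → V) (valid : Finset (Fin n → α))
    (a : (Fin n → α) → V) (hlin : Linear x y valid a)
    (b : Fin n → α) (hb : b ∈ valid) (hsing : ∀ i, D (y i) = {b i})
    (d : α) (hd : d ∈ D (a b)) (hdx : d ∉ D x) :
    ¬ ∃ σ, IsSol D x y valid a σ ∧ σ (a b) = d :=
  stmt11_general D x y valid a b hsing d hdx
end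

section
/- Decomposition preserves arc-consistency: let C_t be a constraint on a variable set containing v expressing s = t(v), and C_v a constraint expressing v = r, such that the variable sets of C_t and C_v intersect only in {v}. If C_t and C_v are both arc-consistent and agree on support for v (each value of D v supported in both), then the composed constraint C, defined as the join of C_t and C_v projected onto the variables other than v with v eliminated by identification, is arc-consistent. -/
/-!
A support for a value of a variable of `Vt` in `Ct` fixes some value of `v`; arc-consistency of `Cv`
at `v` supplies an assignment of `Cv` with the same value of `v`. Since the two variable sets meet only
in `v`, the two assignments glue (take the first on `Vt`, the second elsewhere) to an element of the
join. The case of a variable of `Vv` is symmetric.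
-/

section Join

variable {V α : Type*} {Vt Vv : Set V} {Ct Cv : Set (V → α)}

theorem piecewise_mem_inter_of_eqOn [∀ w, Decidable (w ∈ Vt)]
    (hlocT : ∀ σ τ : V → α, (∀ w ∈ Vt, σ w = τ w) → σ ∈ Ct → τ ∈ Ct)
    (hlocV : ∀ σ τ : V → α, (∀ w ∈ Vv, σ w = τ w) → σ ∈ Cv → τ ∈ Cv)
    {σ τ : V → α} (hσ : σ ∈ Ct) (hτ : τ ∈ Cv) (hστ : ∀ w ∈ Vt ∩ Vv, σ w = τ w) :
    Vt.piecewise σ τ ∈ Ct ∩ Cv := by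
  refine ⟨hlocT σ _ (fun w hw => (Vt.piecewise_eq_of_mem σ τ hw).symm) hσ,
    hlocV τ _ (fun w hw => ?_) hτ⟩
  by_cases hwt : w ∈ Vt
  · rw [Vt.piecewise_eq_of_mem σ τ hwt, hστ w ⟨hwt, hw⟩]
  · rw [Vt.piecewise_eq_of_notMem σ τ hwt]

theorem exists_mem_inter_eqOn_of_eq_at {v : V} (hint : Vt ∩ Vv ⊆ {v})
    (hlocT : ∀ σ τ : V → α, (∀ w ∈ Vt, σ w = τ w) → σ ∈ Ct → τ ∈ Ct)
    (hlocV : ∀ σ τ : V → α, (∀ w ∈ Vv, σ w = τ w) → σ ∈ Cv → τ ∈ Cv)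
    {σ τ : V → α} (hσ : σ ∈ Ct) (hτ : τ ∈ Cv) (hστ : σ v = τ v) :
    ∃ ρ ∈ Ct ∩ Cv, ∀ w ∈ Vt, ρ w = σ w := by
  classical
  refine ⟨Vt.piecewise σ τ, piecewise_mem_inter_of_eqOn hlocT hlocV hσ hτ ?_,
    fun w hw => Vt.piecewise_eq_of_mem σ τ hw⟩
  intro w hw
  rw [Set.mem_singleton_iff.mp (hint hw), hστ]

end Join

theorem stmt13_general {V α : Type*} (D : V → Finset α)
    (Vt Vv : Set V) (v : V) (hvt : v ∈ Vt) (hvv : v ∈ Vv)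
    (hint : Vt ∩ Vv = {v})
    (Ct Cv : Set (V → α))
    (hlocT : ∀ σ τ : V → α, (∀ w ∈ Vt, σ w = τ w) → σ ∈ Ct → τ ∈ Ct)
    (hlocV : ∀ σ τ : V → α, (∀ w ∈ Vv, σ w = τ w) → σ ∈ Cv → τ ∈ Cv)
    (hdomT : ∀ σ ∈ Ct, ∀ w ∈ Vt, σ w ∈ D w)
    (hdomV : ∀ σ ∈ Cv, ∀ w ∈ Vv, σ w ∈ D w)
    (hacT : ∀ w ∈ Vt, ∀ d ∈ D w, ∃ σ ∈ Ct, σ w = d)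
    (hacV : ∀ w ∈ Vv, ∀ d ∈ D w, ∃ σ ∈ Cv, σ w = d) :
    ∀ w ∈ Vt ∪ Vv, ∀ d ∈ D w, ∃ σ ∈ Ct ∩ Cv, σ w = d := by
  rintro w (hw | hw) d hd
  · obtain ⟨σ, hσ, rfl⟩ := hacT w hw d hd
    obtain ⟨τ, hτ, hτv⟩ := hacV v hvv (σ v) (hdomT σ hσ v hvt)
    obtain ⟨ρ, hρ, hρσ⟩ := exists_mem_inter_eqOn_of_eq_at hint.subset hlocT hlocV hσ hτ hτv.symm
    exact ⟨ρ, hρ, hρσ w hw⟩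
  · obtain ⟨τ, hτ, rfl⟩ := hacV w hw d hd
    obtain ⟨σ, hσ, hσv⟩ := hacT v hvt (τ v) (hdomV τ hτ v hvv)
    obtain ⟨ρ, hρ, hρτ⟩ := exists_mem_inter_eqOn_of_eq_at ((Set.inter_comm Vv Vt).trans hint).subset
      hlocV hlocT hτ hσ hσv.symm
    exact ⟨ρ, Set.inter_comm Cv Ct ▸ hρ, hρτ w hw⟩

/-- Decomposition preserves arc-consistency: if `Ct` (over variables `Vt`) and
`Cv` (over variables `Vv`) share exactly the variable `v`, each constraint depends
only on its own variables and respects the domains, both are arc-consistent and agree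
on support for `v`, then their join `Ct ∩ Cv` (the composed constraint `C`) is
arc-consistent on `Vt ∪ Vv`. -/
theorem stmt13 {V α : Type*} (D : V → Finset α)
    (Vt Vv : Set V) (v : V) (hvt : v ∈ Vt) (hvv : v ∈ Vv)
    (hint : Vt ∩ Vv = {v})
    (Ct Cv : Set (V → α))
    (hlocT : ∀ σ τ : V → α, (∀ w ∈ Vt, σ w = τ w) → σ ∈ Ct → τ ∈ Ct)
    (hlocV : ∀ σ τ : V → α, (∀ w ∈ Vv, σ w = τ w) → σ ∈ Cv → τ ∈ Cv)
    (hdomT : ∀ σ ∈ Ct, ∀ w ∈ Vt, σ w ∈ D w)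
    (hdomV : ∀ σ ∈ Cv, ∀ w ∈ Vv, σ w ∈ D w)
    (hacT : ∀ w ∈ Vt, ∀ d ∈ D w, ∃ σ ∈ Ct, σ w = d)
    (hacV : ∀ w ∈ Vv, ∀ d ∈ D w, ∃ σ ∈ Cv, σ w = d)
    (hagree : ∀ d ∈ D v, (∃ σ ∈ Ct, σ v = d) ∧ ∃ σ ∈ Cv, σ v = d) :
    ∀ w ∈ Vt ∪ Vv, ∀ d ∈ D w, ∃ σ ∈ Ct ∩ Cv, σ w = d :=
  stmt13_general D Vt Vv v hvt hvv hint Ct Cv hlocT hlocV hdomT hdomV hacT hacV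
end

section
/- In the ARRAC algorithm setting: if for some index b ∈ D y₁ × … × D yₙ the set T = D x ∩ D a[b] is nonempty, then every element of T is supported for x, and for every coordinate k the value b_k is supported for y_k, by the solution assigning y_i ↦ b_i, x ↦ d, a[b] ↦ d for any d ∈ T (and any domain-respecting values to the remaining array variables, assuming all other array variable domains are nonempty). -/
open Finset

section SupportWitness

variable {V α : Type*} [DecidableEq V] {n : ℕ}

/-- `z` stands for the selected array variable `a b`. -/
noncomputable def supportWitness (x : V) (y : Fin n → V) (b : Fin n → α) (z : V) (d : α)
    (g : V → α) : V → α :=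
  Function.update (Function.update (Function.extend y b g) x d) z d

variable {x z : V} {y : Fin n → V} {b : Fin n → α} {d : α} {g : V → α}

theorem supportWitness_left : supportWitness x y b z d g x = d := by
  by_cases h : x = z
  · subst h; exact Function.update_self ..
  · rw [supportWitness, Function.update_of_ne h, Function.update_self]

theorem supportWitness_right : supportWitness x y b z d g z = d :=
  Function.update_self ..

theorem supportWitness_apply_index (hy : Function.Injective y) (hxy : ∀ i, x ≠ y i)
    (hyz : ∀ i, y i ≠ z) (i : Fin n) : supportWitness x y b z d g (y i) = b i := by
  rw [supportWitness, Function.update_of_ne (hyz i), Function.update_of_ne (hxy i).symm,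
    hy.extend_apply]

theorem supportWitness_mem {D : V → Finset α} (hy : Function.Injective y)
    (hg : ∀ v, g v ∈ D v) (hx : d ∈ D x) (hz : d ∈ D z) (hb : ∀ i, b i ∈ D (y i)) (v : V) :
    supportWitness x y b z d g v ∈ D v := by
  simp only [supportWitness, Function.update_apply]
  split_ifs with hvz hvx
  · exact hvz ▸ hz
  · exact hvx ▸ hx
  · by_cases hv : ∃ i, y i = v
    · obtain ⟨i, rfl⟩ := hv
      rw [hy.extend_apply]
      exact hb i
    · rw [Function.extend_apply' _ _ _ hv]
      exact hg v

end SupportWitness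

theorem stmt16_general {V α : Type*} [DecidableEq α] {n : ℕ}
    (D : V → Finset α) (x : V) (y : Fin n → V) (valid : Finset (Fin n → α))
    (a : (Fin n → α) → V) (hlin : Linear x y valid a)
    (hne : ∀ v : V, (D v).Nonempty)
    (b : Fin n → α) (hb : b ∈ valid) (hbD : ∀ i, b i ∈ D (y i)) :
    ∀ d ∈ D x ∩ D (a b),
      ∃ σ, IsSol D x y valid a σ ∧ σ x = d ∧ σ (a b) = d ∧ ∀ i, σ (y i) = b i := by
  classical
  obtain ⟨hy, -, hxy, -, hya⟩ := hlin
  intro d hd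
  rw [mem_inter] at hd
  choose g hg using hne
  set σ := supportWitness x y b (a b) d g
  have hσy : ∀ i, σ (y i) = b i :=
    supportWitness_apply_index hy hxy fun i => hya i b hb
  have hσb : (fun i => σ (y i)) = b := funext hσy
  refine ⟨σ, ⟨fun v _ => supportWitness_mem hy hg hd.1 hd.2 hbD v, hσb ▸ hb, ?_⟩,
    supportWitness_left, supportWitness_right, hσy⟩
  rw [hσb]
  exact supportWitness_left.trans supportWitness_right.symm

/-- ARRAC support detection: if for a valid index `b` in the index-domain product the
set `T = D x ∩ D (a b)` is nonempty, then (domains being nonempty) every `d ∈ T` is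
supported for `x` and every `b k` is supported for `y k`, by a solution assigning
`y i ↦ b i`, `x ↦ d` and `a b ↦ d`. -/
theorem stmt16 {V α : Type*} [DecidableEq V] [DecidableEq α] {n : ℕ}
    (D : V → Finset α) (x : V) (y : Fin n → V) (valid : Finset (Fin n → α))
    (a : (Fin n → α) → V) (hlin : Linear x y valid a)
    (hne : ∀ v : V, (D v).Nonempty)
    (b : Fin n → α) (hb : b ∈ valid) (hbD : ∀ i, b i ∈ D (y i)) :
    ∀ d ∈ D x ∩ D (a b),
      ∃ σ, IsSol D x y valid a σ ∧ σ x = d ∧ σ (a b) = d ∧ ∀ i, σ (y i) = b i :=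
  stmt16_general D x y valid a hlin hne b hb hbD
end

section
/- Unsupported index values are exactly those removed by R_y: in the linear constraint x = a[y₁,…,yₙ] with all array variable domains nonempty and D x nonempty, a value b ∈ D y_k is supported by some solution if and only if there exists an index b' ∈ ∏ D y_i with b'_k = b and D x ∩ D a[b'] ≠ ∅. -/
open Finset

namespace IsSol

variable {V α : Type*} [DecidableEq α] {n : ℕ} {D : V → Finset α} {x : V} {y : Fin n → V}
  {valid : Finset (Fin n → α)} {a : (Fin n → α) → V} {σ : V → α}

theorem mem_dom_index (hσ : IsSol D x y valid a σ) (i : Fin n) : σ (y i) ∈ D (y i) :=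
  hσ.1 (y i) (Or.inr (Or.inl ⟨i, rfl⟩))

theorem inter_nonempty (hσ : IsSol D x y valid a σ) :
    (D x ∩ D (a fun i => σ (y i))).Nonempty := by
  obtain ⟨hdom, hvalid, heq⟩ := hσ
  refine ⟨σ x, mem_inter.2 ⟨hdom x (Or.inl rfl), ?_⟩⟩
  rw [heq]
  exact hdom _ (Or.inr (Or.inr ⟨_, hvalid, rfl⟩))

end IsSol

/-- Since all variables of a linear constraint are distinct, the index variables, the pair
`x`, `a b'` and the remaining array variables can be assigned independently. -/
theorem Linear.isSol_extend {V α : Type*} [DecidableEq V] [DecidableEq α] {n : ℕ}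
    {D : V → Finset α} {x : V} {y : Fin n → V} {valid : Finset (Fin n → α)}
    {a : (Fin n → α) → V} (hlin : Linear x y valid a) {dflt : V → α} (hdflt : ∀ v, dflt v ∈ D v)
    {b' : Fin n → α} (hb' : b' ∈ valid) (hb'D : ∀ i, b' i ∈ D (y i))
    {c : α} (hcx : c ∈ D x) (hca : c ∈ D (a b')) :
    IsSol D x y valid a
      (Function.extend y b' fun v => if v = x ∨ v = a b' then c else dflt v) := by
  obtain ⟨hyinj, hainj, hxy, hxa, hya⟩ := hlin
  set σ := Function.extend y b' fun v => if v = x ∨ v = a b' then c else dflt v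
  have hσy : (fun i => σ (y i)) = b' := funext fun i => hyinj.extend_apply _ _ i
  have hσ_off : ∀ v, (∀ i, y i ≠ v) → σ v = if v = x ∨ v = a b' then c else dflt v :=
    fun v hv => Function.extend_apply' _ _ _ fun ⟨i, hi⟩ => hv i hi
  have hσx : σ x = c := by
    rw [hσ_off x fun i h => hxy i h.symm, if_pos (Or.inl rfl)]
  have hσab' : σ (a b') = c := by
    rw [hσ_off _ fun i => hya i b' hb', if_pos (Or.inr rfl)]
  refine ⟨?_, hσy ▸ hb', by rw [hσy, hσx, hσab']⟩
  rintro v (rfl | ⟨i, rfl⟩ | ⟨b'', hb'', rfl⟩)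
  · rw [hσx]; exact hcx
  · exact congrFun hσy i ▸ hb'D i
  · rw [hσ_off _ fun i => hya i b'' hb'']
    split_ifs with h
    · rcases h with h | h
      · exact absurd h.symm (hxa b'' hb'')
      · rwa [hainj b'' hb'' b' hb' h]
    · exact hdflt _

theorem stmt18_general {V α : Type*} [DecidableEq α] {n : ℕ}
    (D : V → Finset α) (x : V) (y : Fin n → V) (valid : Finset (Fin n → α))
    (a : (Fin n → α) → V) (hlin : Linear x y valid a)
    (hne : ∀ v : V, (D v).Nonempty)
    (k : Fin n) (b : α) :
    (∃ σ, IsSol D x y valid a σ ∧ σ (y k) = b) ↔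
      ∃ b' ∈ valid, (∀ i, b' i ∈ D (y i)) ∧ b' k = b ∧ (D x ∩ D (a b')).Nonempty := by
  constructor
  · rintro ⟨σ, hσ, rfl⟩
    exact ⟨_, hσ.2.1, hσ.mem_dom_index, rfl, hσ.inter_nonempty⟩
  · rintro ⟨b', hb', hb'D, rfl, c, hc⟩
    classical
    choose dflt hdflt using hne
    rw [mem_inter] at hc
    exact ⟨_, hlin.isSol_extend hdflt hb' hb'D hc.1 hc.2, hlin.1.extend_apply _ _ k⟩

/-- Unsupported index values are exactly those removed by R_y: over nonempty domains,
a value `b ∈ D (y k)` is supported by a solution of the linear constraint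
`x = a[y₁,…,yₙ]` iff there is a valid index `b'` in the index-domain product with
`b' k = b` and `D x ∩ D (a b') ≠ ∅`. -/
theorem stmt18 {V α : Type*} [DecidableEq V] [DecidableEq α] {n : ℕ}
    (D : V → Finset α) (x : V) (y : Fin n → V) (valid : Finset (Fin n → α))
    (a : (Fin n → α) → V) (hlin : Linear x y valid a)
    (hne : ∀ v : V, (D v).Nonempty)
    (k : Fin n) (b : α) (hb : b ∈ D (y k)) :
    (∃ σ, IsSol D x y valid a σ ∧ σ (y k) = b) ↔
      ∃ b' ∈ valid, (∀ i, b' i ∈ D (y i)) ∧ b' k = b ∧ (D x ∩ D (a b')).Nonempty :=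
  stmt18_general D x y valid a hlin hne k b
end

section
/- A value d ∈ D a[b] for an index b outside the current index-domain product ∏ D y_i is supported whenever the constraint is satisfiable: if the linear constraint x = a[y₁,…,yₙ] has some solution and b ∉ D y₁ × … × D yₙ, then for every d ∈ D a[b] there is a solution assigning d to a[b]. -/
open Finset

/-! Changing a solution at a variable other than `x`, the `yᵢ` and the selected array
variable `a[σ y]` keeps it a solution, as long as the new value lies in the domain. Under
linearity, `a[b]` is such a variable: a solution's index `σ y` lies in `∏ D yᵢ`, which `b`
does not, so `σ y ≠ b`, and `a` is injective on valid indices. -/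

section

variable {V α : Type*} [DecidableEq α] {n : ℕ} {D : V → Finset α} {x : V}
  {y : Fin n → V} {valid : Finset (Fin n → α)} {a : (Fin n → α) → V} {σ : V → α}

theorem IsSol.mem_domain_index_s19 (hσ : IsSol D x y valid a σ) (i : Fin n) : σ (y i) ∈ D (y i) :=
  hσ.1 (y i) (Or.inr (Or.inl ⟨i, rfl⟩))

theorem IsSol.update [DecidableEq V] {v : V} {d : α} (hσ : IsSol D x y valid a σ) (hvx : v ≠ x)
    (hvy : ∀ i, v ≠ y i) (hvsel : v ≠ a fun i => σ (y i)) (hd : d ∈ D v) :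
    IsSol D x y valid a (Function.update σ v d) := by
  obtain ⟨hdom, hvalid, heq⟩ := hσ
  have hindex : (fun i => Function.update σ v d (y i)) = fun i => σ (y i) :=
    funext fun i => Function.update_of_ne (hvy i).symm _ _
  refine ⟨fun w hw => ?_, hindex ▸ hvalid, ?_⟩
  · rcases eq_or_ne w v with rfl | hwv
    · simpa using hd
    · simpa [hwv] using hdom w hw
  · rw [hindex, Function.update_of_ne hvx.symm, Function.update_of_ne hvsel.symm]
    exact heq

theorem Linear.apply_ne_selected (hlin : Linear x y valid a) (hσ : IsSol D x y valid a σ)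
    {b : Fin n → α} (hb : b ∈ valid) (hout : ¬ ∀ i, b i ∈ D (y i)) :
    a b ≠ a fun i => σ (y i) := fun h =>
  hout (hlin.2.1 _ hσ.2.1 _ hb h.symm ▸ hσ.mem_domain_index_s19)

end

/-- Values of array variables outside the current index-domain product are supported
whenever the constraint is satisfiable: if `b` is a valid index not in
`D y₁ × … × D yₙ` and the linear constraint `x = a[y₁,…,yₙ]` has a solution, then for
every `d ∈ D (a b)` there is a solution assigning `d` to `a b`. -/
theorem stmt19 {V α : Type*} [DecidableEq V] [DecidableEq α] {n : ℕ}
    (D : V → Finset α) (x : V) (y : Fin n → V) (valid : Finset (Fin n → α))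
    (a : (Fin n → α) → V) (hlin : Linear x y valid a)
    (hsat : ∃ σ, IsSol D x y valid a σ)
    (b : Fin n → α) (hb : b ∈ valid) (hout : ¬ ∀ i, b i ∈ D (y i)) :
    ∀ d ∈ D (a b), ∃ σ, IsSol D x y valid a σ ∧ σ (a b) = d := by
  intro d hd
  obtain ⟨σ, hσ⟩ := hsat
  refine ⟨Function.update σ (a b) d, ?_, Function.update_self _ _ _⟩
  exact hσ.update (hlin.2.2.2.1 b hb).symm (fun i => (hlin.2.2.2.2 i b hb).symm)
    (hlin.apply_ne_selected hσ hb hout) hd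
end
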